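/- arXiv:2106.04759 — 5 statements merged into one kernel-verified Lean document; each statement's English description precedes it below -/
import Mathlib

section
/- Suppose f : R^d → R is continuously differentiable with L-Lipschitz gradient and satisfies the μ-Polyak–Łojasiewicz inequality ‖∇f(x)‖² ≥ 2μ(f(x) − f*) for all x, where f* = inf f is attained at some x*. Then f satisfies the quadratic growth condition: ‖x − x*‖² ≤ (2/μ)(f(x) − f*) for all x, whenever x* is the unique minimizer and the PL condition implies this error bound. -/
/-!
Run gradient descent from `x` with a small step `η`. The descent lemma and the PL inequality
make `√(f - f*)` drop by at least `(1 - Lη/2) √(μ/2)` times the length of each step, so the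
iterates have finite total length and converge; the gradients along them tend to zero, so by
PL the limit is a minimiser, hence `x*`. Thus `(1 - Lη/2) √(μ/2) ‖x - x*‖ ≤ √(f x - f*)`,
and `η → 0` gives the claim.
-/

open Filter Topology

section Descent

variable {E : Type*} [NormedAddCommGroup E] [InnerProductSpace ℝ E] [CompleteSpace E]
  {f : E → ℝ} {L : ℝ}

theorem le_add_inner_gradient_add_sq (hf : Differentiable ℝ f)
    (hlip : ∀ x y, ‖gradient f x - gradient f y‖ ≤ L * ‖x - y‖) (x v : E) :
    f (x + v) ≤ f x + inner ℝ (gradient f x) v + L / 2 * ‖v‖ ^ 2 := by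
  set g : ℝ → ℝ := fun t => t * inner ℝ (gradient f x) v + L / 2 * t ^ 2 * ‖v‖ ^ 2 - f (x + t • v)
  have hline : ∀ t : ℝ, HasDerivAt (fun t : ℝ => x + t • v) v t := fun t => by
    simpa using ((hasDerivAt_id t).smul_const v).const_add x
  have hg : ∀ t, HasDerivAt g (inner ℝ (gradient f x) v + L * t * ‖v‖ ^ 2
      - inner ℝ (gradient f (x + t • v)) v) t := fun t => by
    have hft := ((hf (x + t • v)).hasGradientAt.hasFDerivAt.comp_hasDerivAt t (hline t))
    have hpoly := (((hasDerivAt_id t).mul_const (inner ℝ (gradient f x) v)).add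
      (((hasDerivAt_pow 2 t).const_mul (L / 2)).mul_const (‖v‖ ^ 2))).sub hft
    refine hpoly.congr_deriv ?_
    rw [InnerProductSpace.toDual_apply_apply]
    push_cast
    ring
  have hg' : ∀ t ∈ interior (Set.Ici (0 : ℝ)), 0 ≤ inner ℝ (gradient f x) v + L * t * ‖v‖ ^ 2
      - inner ℝ (gradient f (x + t • v)) v := fun t ht => by
    rw [interior_Ici, Set.mem_Ioi] at ht
    have hcs := real_inner_le_norm (gradient f (x + t • v) - gradient f x) v
    have hl := hlip (x + t • v) x
    rw [add_sub_cancel_left, norm_smul, Real.norm_eq_abs, abs_of_pos ht] at hl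
    rw [inner_sub_left] at hcs
    nlinarith [norm_nonneg v]
  have hmono := monotoneOn_of_hasDerivWithinAt_nonneg (convex_Ici 0)
    (fun t _ => (hg t).continuousAt.continuousWithinAt)
    (fun t _ => (hg t).hasDerivWithinAt) hg'
  have h01 := hmono Set.self_mem_Ici (Set.mem_Ici.2 zero_le_one) zero_le_one
  simp only [g, zero_smul, add_zero, one_smul] at h01
  linarith

noncomputable def gradientStep (f : E → ℝ) (η : ℝ) (x : E) : E := x - η • gradient f x

theorem le_sub_mul_norm_gradient_sq_gradientStep (hf : Differentiable ℝ f)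
    (hlip : ∀ x y, ‖gradient f x - gradient f y‖ ≤ L * ‖x - y‖) (η : ℝ) (x : E) :
    f (gradientStep f η x) ≤ f x - η * (1 - L * η / 2) * ‖gradient f x‖ ^ 2 := by
  have h := le_add_inner_gradient_add_sq hf hlip x (-(η • gradient f x))
  rw [← sub_eq_add_neg, inner_neg_right, real_inner_smul_right, real_inner_self_eq_norm_sq,
    norm_neg, norm_smul, Real.norm_eq_abs, mul_pow, sq_abs] at h
  unfold gradientStep
  linarith

theorem dist_gradientStep {η : ℝ} (hη : 0 ≤ η) (x : E) :
    dist x (gradientStep f η x) = η * ‖gradient f x‖ := by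
  rw [gradientStep, dist_eq_norm, sub_sub_cancel, norm_smul, Real.norm_eq_abs, abs_of_nonneg hη]

end Descent

theorem mul_le_sqrt_sub_sqrt_of_le_sub_mul_sq {a b c g μ : ℝ} (hb : 0 ≤ b) (hc : 0 ≤ c)
    (hμ : 0 ≤ μ) (hg : 0 ≤ g) (hdec : b ≤ a - c * g ^ 2) (hPL : 2 * μ * a ≤ g ^ 2) :
    c * √(μ / 2) * g ≤ √a - √b := by
  have ha : 0 ≤ a := by nlinarith
  have hsa : √(μ / 2) * √a ≤ g / 2 := by
    rw [← Real.sqrt_mul (by positivity), Real.sqrt_le_left (by positivity)]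
    nlinarith
  have hab : √b ≤ √a := Real.sqrt_le_sqrt (by nlinarith)
  have hsq : c * g ^ 2 ≤ (√a - √b) * (2 * √a) := by
    nlinarith [Real.sq_sqrt ha, Real.sq_sqrt hb, Real.sqrt_nonneg b]
  have key : (c * √(μ / 2) * g) * (2 * √a) ≤ (√a - √b) * (2 * √a) := by
    nlinarith [mul_nonneg hc hg]
  rcases (Real.sqrt_nonneg a).eq_or_lt with h0 | hpos
  · have hcg : c * g ^ 2 = 0 := by nlinarith [Real.sqrt_nonneg b]
    have hcg0 : c * g = 0 := pow_eq_zero_iff two_ne_zero |>.1 (by linear_combination c * hcg)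
    calc c * √(μ / 2) * g = √(μ / 2) * (c * g) := by ring
      _ = 0 := by rw [hcg0, mul_zero]
      _ ≤ √a - √b := sub_nonneg.2 hab
  · exact le_of_mul_le_mul_right key (by positivity)

theorem exists_tendsto_mul_dist_le_of_mul_dist_le_sub {α : Type*} [MetricSpace α]
    [CompleteSpace α] {u : ℕ → α} {φ : ℕ → ℝ} {K : ℝ} (hK : 0 < K) (hφ : ∀ n, 0 ≤ φ n)
    (h : ∀ n, K * dist (u n) (u (n + 1)) ≤ φ n - φ (n + 1)) :
    ∃ z, Tendsto u atTop (𝓝 z) ∧ K * dist (u 0) z ≤ φ 0 := by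
  have hsum : ∀ N, K * ∑ i ∈ Finset.range N, dist (u i) (u (i + 1)) ≤ φ 0 := fun N => by
    calc K * ∑ i ∈ Finset.range N, dist (u i) (u (i + 1))
        ≤ ∑ i ∈ Finset.range N, (φ i - φ (i + 1)) := by
          rw [Finset.mul_sum]; exact Finset.sum_le_sum fun i _ => h i
      _ = φ 0 - φ N := Finset.sum_range_sub' φ N
      _ ≤ φ 0 := sub_le_self _ (hφ N)
  have hsummable : Summable fun n => dist (u n) (u (n + 1)) :=
    summable_of_sum_range_le (fun _ => dist_nonneg) fun N => (le_div_iff₀' hK).2 (hsum N)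
  obtain ⟨z, hz⟩ := cauchySeq_tendsto_of_complete (cauchySeq_of_summable_dist hsummable)
  refine ⟨z, hz, le_of_tendsto ((tendsto_const_nhds.dist hz).const_mul K) ?_⟩
  exact Eventually.of_forall fun N =>
    (mul_le_mul_of_nonneg_left (dist_le_range_sum_dist u N) hK.le).trans (hsum N)

section PolyakLojasiewicz

variable {E : Type*} [NormedAddCommGroup E] [InnerProductSpace ℝ E] [CompleteSpace E]
  {f : E → ℝ} {L μ m η : ℝ}

theorem mul_dist_gradientStep_le_sqrt_sub_sqrt (hf : Differentiable ℝ f)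
    (hlip : ∀ x y, ‖gradient f x - gradient f y‖ ≤ L * ‖x - y‖) (hμ : 0 ≤ μ)
    (hmin : ∀ x, m ≤ f x) (hPL : ∀ x, 2 * μ * (f x - m) ≤ ‖gradient f x‖ ^ 2)
    (hη : 0 ≤ η) (hLη : L * η ≤ 2) (x : E) :
    (1 - L * η / 2) * √(μ / 2) * dist x (gradientStep f η x)
      ≤ √(f x - m) - √(f (gradientStep f η x) - m) := by
  have hdec := le_sub_mul_norm_gradient_sq_gradientStep hf hlip η x
  calc (1 - L * η / 2) * √(μ / 2) * dist x (gradientStep f η x)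
      = η * (1 - L * η / 2) * √(μ / 2) * ‖gradient f x‖ := by
        rw [dist_gradientStep hη]; ring
    _ ≤ _ := mul_le_sqrt_sub_sqrt_of_le_sub_mul_sq (sub_nonneg.2 (hmin _))
        (mul_nonneg hη (by linarith)) hμ (norm_nonneg _) (by linarith) (hPL x)

theorem exists_eq_and_mul_dist_le_sqrt (hf : Differentiable ℝ f)
    (hlip : ∀ x y, ‖gradient f x - gradient f y‖ ≤ L * ‖x - y‖) (hμ : 0 < μ)
    (hmin : ∀ x, m ≤ f x) (hPL : ∀ x, 2 * μ * (f x - m) ≤ ‖gradient f x‖ ^ 2)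
    (hη : 0 < η) (hLη : L * η < 2) (x : E) :
    ∃ z, f z = m ∧ (1 - L * η / 2) * √(μ / 2) * dist x z ≤ √(f x - m) := by
  set u : ℕ → E := fun n => (gradientStep f η)^[n] x
  have hu : ∀ n, u (n + 1) = gradientStep f η (u n) := fun n =>
    Function.iterate_succ_apply' _ _ _
  have hK : 0 < (1 - L * η / 2) * √(μ / 2) :=
    mul_pos (by linarith) (Real.sqrt_pos.2 (half_pos hμ))
  obtain ⟨z, hz, hdist⟩ := exists_tendsto_mul_dist_le_of_mul_dist_le_sub (u := u)
    (φ := fun n => √(f (u n) - m)) hK (fun _ => Real.sqrt_nonneg _) fun n => by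
      rw [hu]
      exact mul_dist_gradientStep_le_sqrt_sub_sqrt hf hlip hμ.le hmin hPL hη.le hLη.le (u n)
  refine ⟨z, le_antisymm ?_ (hmin z), hdist⟩
  have hgap : ∀ n, f (u n) - m ≤ dist (u n) (u (n + 1)) ^ 2 / (2 * μ * η ^ 2) := fun n => by
    rw [hu, dist_gradientStep hη.le, le_div_iff₀ (by positivity)]
    nlinarith [hPL (u n)]
  have hstep : Tendsto (fun n => dist (u n) (u (n + 1))) atTop (𝓝 0) := by
    simpa using hz.dist (hz.comp (tendsto_add_atTop_nat 1))
  have hlim := le_of_tendsto_of_tendsto' (((hf.continuous.tendsto z).comp hz).sub_const m)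
    ((hstep.pow 2).div_const _) hgap
  rwa [zero_pow two_ne_zero, zero_div, sub_nonpos] at hlim

end PolyakLojasiewicz

theorem pl_implies_quadratic_growth_general (d : ℕ) (f : EuclideanSpace ℝ (Fin d) → ℝ)
    (L μ : ℝ) (hμ : 0 < μ)
    (hdiff : ContDiff ℝ 1 f)
    (hlip : ∀ x y, ‖gradient f x - gradient f y‖ ≤ L * ‖x - y‖)
    (xstar : EuclideanSpace ℝ (Fin d))
    (hmin : ∀ x, f xstar ≤ f x)
    (huniq : ∀ x, f x = f xstar → x = xstar)
    (hPL : ∀ x, ‖gradient f x‖ ^ 2 ≥ 2 * μ * (f x - f xstar)) :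
    ∀ x, ‖x - xstar‖ ^ 2 ≤ (2 / μ) * (f x - f xstar) := by
  intro x
  have hsmall : ∀ᶠ η in 𝓝[>] (0 : ℝ), L * η < 2 :=
    nhdsWithin_le_nhds <| ((continuous_const_mul L).tendsto' 0 0 (mul_zero L)).eventually_lt_const
      two_pos
  have hbound : ∀ᶠ η in 𝓝[>] (0 : ℝ),
      (1 - L * η / 2) * √(μ / 2) * ‖x - xstar‖ ≤ √(f x - f xstar) := by
    filter_upwards [self_mem_nhdsWithin, hsmall] with η hη hLη
    obtain ⟨z, hz, hdist⟩ := exists_eq_and_mul_dist_le_sqrt (hdiff.differentiable one_ne_zero)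
      hlip hμ hmin hPL hη hLη x
    rwa [huniq z hz, dist_eq_norm] at hdist
  have hlim : Tendsto (fun η => (1 - L * η / 2) * √(μ / 2) * ‖x - xstar‖) (𝓝[>] 0)
      (𝓝 (√(μ / 2) * ‖x - xstar‖)) :=
    tendsto_nhdsWithin_of_tendsto_nhds <| by
      simpa using (show Continuous fun η : ℝ => (1 - L * η / 2) * √(μ / 2) * ‖x - xstar‖ by
        fun_prop).tendsto 0
  have hroot := le_of_tendsto hlim hbound
  rw [Real.le_sqrt (by positivity) (sub_nonneg.2 (hmin x)), mul_pow,
    Real.sq_sqrt (by positivity)] at hroot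
  rw [div_mul_eq_mul_div, le_div_iff₀ hμ]
  linarith

theorem pl_implies_quadratic_growth (d : ℕ) (f : EuclideanSpace ℝ (Fin d) → ℝ)
    (L μ : ℝ) (hμ : 0 < μ) (hL : 0 < L)
    (hdiff : ContDiff ℝ 1 f)
    (hlip : ∀ x y, ‖gradient f x - gradient f y‖ ≤ L * ‖x - y‖)
    (xstar : EuclideanSpace ℝ (Fin d))
    (hmin : ∀ x, f xstar ≤ f x)
    (huniq : ∀ x, f x = f xstar → x = xstar)
    (hPL : ∀ x, ‖gradient f x‖ ^ 2 ≥ 2 * μ * (f x - f xstar)) :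
    ∀ x, ‖x - xstar‖ ^ 2 ≤ (2 / μ) * (f x - f xstar) :=
  pl_implies_quadratic_growth_general d f L μ hμ hdiff hlip xstar hmin huniq hPL
end

section
/- Let f be L-smooth and μ-strongly convex, let x_1,...,x_N ∈ R^d, x̄ = (1/N)∑x_i, g_i = ∇f(x_i), and ḡ = (1/N)∑g_i. Then ∑_{i=1}^N ‖g_i − ḡ‖² ≤ 2L ∑_{i=1}^N ⟨g_i, x_i − x̄⟩. -/
/-!
Cocoercivity of the gradient of a convex `L`-smooth function, taken at the mean `x̄`, bounds
`∑ ‖gᵢ - ∇f x̄‖²` by `2L ∑ (f xᵢ - f x̄)`, since the linear terms `⟪∇f x̄, xᵢ - x̄⟫` sum to zero.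
Replacing `∇f x̄` by the mean `ḡ` only decreases the left side, and convexity gives
`f xᵢ - f x̄ ≤ ⟪gᵢ, xᵢ - x̄⟫`.
-/

open Finset InnerProductSpace

section

variable {E : Type*} [NormedAddCommGroup E] [InnerProductSpace ℝ E]

theorem Finset.sum_sub_inv_card_smul_sum {ι M : Type*} [Fintype ι] [AddCommGroup M] [Module ℝ M]
    (v : ι → M) : ∑ i, (v i - (Fintype.card ι : ℝ)⁻¹ • ∑ j, v j) = 0 := by
  cases isEmpty_or_nonempty ι
  · simp
  · rw [sum_sub_distrib, sum_const, card_univ, ← Nat.cast_smul_eq_nsmul ℝ, smul_smul,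
      mul_inv_cancel₀ (Nat.cast_ne_zero.2 Fintype.card_ne_zero), one_smul, sub_self]

theorem Finset.sum_norm_sub_inv_card_smul_sum_sq_le {ι : Type*} [Fintype ι] (v : ι → E) (c : E) :
    ∑ i, ‖v i - (Fintype.card ι : ℝ)⁻¹ • ∑ j, v j‖ ^ 2 ≤ ∑ i, ‖v i - c‖ ^ 2 := by
  set m := (Fintype.card ι : ℝ)⁻¹ • ∑ j, v j
  have hsplit : ∀ i, ‖v i - c‖ ^ 2 = ‖v i - m‖ ^ 2 + 2 * ⟪v i - m, m - c⟫_ℝ + ‖m - c‖ ^ 2 := by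
    intro i
    rw [← norm_add_sq_real, sub_add_sub_cancel]
  have hcross : ∑ i, ⟪v i - m, m - c⟫_ℝ = 0 := by
    rw [← sum_inner, sum_sub_inv_card_smul_sum, inner_zero_left]
  simp only [hsplit, sum_add_distrib, ← mul_sum, hcross, mul_zero, add_zero]
  exact le_add_of_nonneg_right (sum_nonneg fun i _ => sq_nonneg _)

variable [CompleteSpace E] {f : E → ℝ} {L : ℝ}

theorem HasGradientAt.hasDerivAt_comp_add_smul {a v f' : E} {t : ℝ}
    (hf : HasGradientAt f f' (a + t • v)) :
    HasDerivAt (fun s : ℝ => f (a + s • v)) ⟪f', v⟫_ℝ t := by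
  have hline : HasDerivAt (fun s : ℝ => a + s • v) v t := by
    simpa using ((hasDerivAt_id t).smul_const v).const_add a
  exact hf.hasFDerivAt.comp_hasDerivAt t hline

theorem le_add_inner_gradient_add_sq_of_lipschitz_gradient (hf : Differentiable ℝ f)
    (hlip : ∀ x y, ‖gradient f x - gradient f y‖ ≤ L * ‖x - y‖) (a b : E) :
    f b ≤ f a + ⟪gradient f a, b - a⟫_ℝ + L / 2 * ‖b - a‖ ^ 2 := by
  set v := b - a
  let φ : ℝ → ℝ := fun t => f (a + t • v) - t * ⟪gradient f a, v⟫_ℝ - L / 2 * t ^ 2 * ‖v‖ ^ 2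
  have hφ : ∀ t, HasDerivAt φ
      (⟪gradient f (a + t • v), v⟫_ℝ - ⟪gradient f a, v⟫_ℝ - L * t * ‖v‖ ^ 2) t := by
    intro t
    have h := (((hf (a + t • v)).hasGradientAt.hasDerivAt_comp_add_smul).sub
      ((hasDerivAt_id t).mul_const ⟪gradient f a, v⟫_ℝ)).sub
      (((hasDerivAt_pow 2 t).const_mul (L / 2)).mul_const (‖v‖ ^ 2))
    exact h.congr_deriv (by simp only [Nat.cast_ofNat, one_mul, Nat.add_one_sub_one, pow_one]; ring)
  have hanti : AntitoneOn φ (Set.Icc 0 1) := by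
    refine antitoneOn_of_hasDerivWithinAt_nonpos (convex_Icc 0 1)
      (HasDerivAt.continuousOn fun t _ => hφ t) (fun t _ => (hφ t).hasDerivWithinAt) ?_
    intro t ht
    rw [interior_Icc] at ht
    rw [sub_nonpos]
    have hgrad : ‖gradient f (a + t • v) - gradient f a‖ ≤ L * (t * ‖v‖) := by
      simpa [norm_smul, abs_of_pos ht.1] using hlip (a + t • v) a
    calc ⟪gradient f (a + t • v), v⟫_ℝ - ⟪gradient f a, v⟫_ℝ
        = ⟪gradient f (a + t • v) - gradient f a, v⟫_ℝ := (inner_sub_left _ _ _).symm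
      _ ≤ ‖gradient f (a + t • v) - gradient f a‖ * ‖v‖ := real_inner_le_norm _ _
      _ ≤ L * (t * ‖v‖) * ‖v‖ := by gcongr
      _ = L * t * ‖v‖ ^ 2 := by ring
  have hends := hanti (by simp) (by simp) zero_le_one
  simp only [φ, v, zero_smul, one_smul, add_zero, add_sub_cancel, zero_mul, sub_zero, one_mul,
    zero_pow two_ne_zero, mul_zero, one_pow] at hends
  linarith

/-- Convexity at `y` and the descent lemma at `x`, both evaluated at `x - L⁻¹ • (∇f x - ∇f y)`. -/
theorem norm_gradient_sub_sq_le (hL : 0 < L) (hf : Differentiable ℝ f)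
    (hlip : ∀ x y, ‖gradient f x - gradient f y‖ ≤ L * ‖x - y‖)
    (hconv : ∀ x y, f x + ⟪gradient f x, y - x⟫_ℝ ≤ f y) (x y : E) :
    ‖gradient f x - gradient f y‖ ^ 2 ≤ 2 * L * (f x - f y - ⟪gradient f y, x - y⟫_ℝ) := by
  set g := gradient f x - gradient f y
  have hlower := hconv y (x - L⁻¹ • g)
  have hupper := le_add_inner_gradient_add_sq_of_lipschitz_gradient hf hlip x (x - L⁻¹ • g)
  rw [sub_right_comm, inner_sub_right, real_inner_smul_right] at hlower
  rw [sub_sub_cancel_left, inner_neg_right, real_inner_smul_right, norm_neg, norm_smul,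
    Real.norm_of_nonneg (inv_nonneg.2 hL.le)] at hupper
  have hg : ⟪gradient f x, g⟫_ℝ - ⟪gradient f y, g⟫_ℝ = ‖g‖ ^ 2 := by
    rw [← inner_sub_left, real_inner_self_eq_norm_sq]
  have hquad : L / 2 * (L⁻¹ * ‖g‖) ^ 2 = L⁻¹ * ‖g‖ ^ 2 / 2 := by field_simp
  have hlin : L⁻¹ * ⟪gradient f x, g⟫_ℝ - L⁻¹ * ⟪gradient f y, g⟫_ℝ = L⁻¹ * ‖g‖ ^ 2 := by
    rw [← mul_sub, hg]
  calc ‖g‖ ^ 2 = 2 * L * (L⁻¹ * ‖g‖ ^ 2 / 2) := by field_simp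
    _ ≤ 2 * L * (f x - f y - ⟪gradient f y, x - y⟫_ℝ) := by gcongr; linarith

end

theorem grad_variance_le_general (d N : ℕ)
    (f : EuclideanSpace ℝ (Fin d) → ℝ) (L μ : ℝ) (hL : 0 < L) (hμ : 0 < μ)
    (hdiff : ContDiff ℝ 1 f)
    (hlip : ∀ x y, ‖gradient f x - gradient f y‖ ≤ L * ‖x - y‖)
    (hsc : ∀ x y, f x + inner ℝ (gradient f x) (y - x) + (μ / 2) * ‖x - y‖ ^ 2 ≤ f y)
    (x : Fin N → EuclideanSpace ℝ (Fin d)) :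
    ∑ i, ‖gradient f (x i) - (N : ℝ)⁻¹ • ∑ j, gradient f (x j)‖ ^ 2 ≤
      2 * L * ∑ i, (inner ℝ (gradient f (x i))
        (x i - (N : ℝ)⁻¹ • ∑ j, x j) : ℝ) := by
  have hconv : ∀ x y, f x + ⟪gradient f x, y - x⟫_ℝ ≤ f y := fun x y =>
    (le_add_of_nonneg_right (by positivity)).trans (hsc x y)
  have hmean := sum_sub_inv_card_smul_sum x
  have hvar := sum_norm_sub_inv_card_smul_sum_sq_le (fun i => gradient f (x i))
  simp only [Fintype.card_fin] at hmean hvar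
  set xbar := (N : ℝ)⁻¹ • ∑ j, x j
  calc ∑ i, ‖gradient f (x i) - (N : ℝ)⁻¹ • ∑ j, gradient f (x j)‖ ^ 2
      ≤ ∑ i, ‖gradient f (x i) - gradient f xbar‖ ^ 2 := hvar _
    _ ≤ ∑ i, 2 * L * (f (x i) - f xbar - ⟪gradient f xbar, x i - xbar⟫_ℝ) :=
        sum_le_sum fun i _ =>
          norm_gradient_sub_sq_le hL (hdiff.differentiable one_ne_zero) hlip hconv _ _
    _ = 2 * L * ∑ i, (f (x i) - f xbar) := by
        rw [← mul_sum, sum_sub_distrib, ← inner_sum, hmean, inner_zero_right, sub_zero]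
    _ ≤ 2 * L * ∑ i, ⟪gradient f (x i), x i - xbar⟫_ℝ := by
        gcongr with i
        have hconv_i := hconv (x i) xbar
        rw [← neg_sub, inner_neg_right] at hconv_i
        linarith

theorem grad_variance_le (d N : ℕ) (hN : 1 ≤ N)
    (f : EuclideanSpace ℝ (Fin d) → ℝ) (L μ : ℝ) (hL : 0 < L) (hμ : 0 < μ)
    (hdiff : ContDiff ℝ 1 f)
    (hlip : ∀ x y, ‖gradient f x - gradient f y‖ ≤ L * ‖x - y‖)
    (hsc : ∀ x y, f x + inner ℝ (gradient f x) (y - x) + (μ / 2) * ‖x - y‖ ^ 2 ≤ f y)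
    (x : Fin N → EuclideanSpace ℝ (Fin d)) :
    ∑ i, ‖gradient f (x i) - (N : ℝ)⁻¹ • ∑ j, gradient f (x j)‖ ^ 2 ≤
      2 * L * ∑ i, (inner ℝ (gradient f (x i))
        (x i - (N : ℝ)⁻¹ • ∑ j, x j) : ℝ) :=
  grad_variance_le_general d N f L μ hL hμ hdiff hlip hsc x
end

section
/- Let (ξ_t)_{t≥0} be a nonnegative sequence satisfying ξ_{t+1} ≤ (1 − 3/(t+β))·ξ_t + C/(t+β)² for all t ≥ 0, where β ≥ 2 and C ≥ 0. Then for all T ≥ 1, ξ_T ≤ (β−1)²·ξ_0/(T+β−1)² + C·T/(T+β−1)². -/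
/-! Multiplying the recursion by `(t + β)²` and using `(t + β)² - 3 (t + β) ≤ (t + β - 1)²`
shows that `w t := (t + β - 1)² ξ t` grows by at most `C` per step, so `w t - C t` is
antitone and `w T ≤ (β - 1)² ξ 0 + C T`. -/

lemma sq_mul_le_sub_one_sq_mul_add {s x y C : ℝ} (hs : 0 < s) (hx : 0 ≤ x)
    (h : y ≤ (1 - 3 / s) * x + C / s ^ 2) : s ^ 2 * y ≤ (s - 1) ^ 2 * x + C :=
  calc s ^ 2 * y ≤ s ^ 2 * ((1 - 3 / s) * x + C / s ^ 2) := by gcongr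
    _ = (s ^ 2 - 3 * s) * x + C := by field_simp
    _ ≤ (s - 1) ^ 2 * x + C := by gcongr; linarith

theorem sgd_recursion_bound_general (ξ : ℕ → ℝ) (β C : ℝ) (hβ : 2 ≤ β)
    (hξ : ∀ t, 0 ≤ ξ t)
    (hrec : ∀ t : ℕ, ξ (t + 1) ≤ (1 - 3 / ((t : ℝ) + β)) * ξ t + C / ((t : ℝ) + β) ^ 2) :
    ∀ T : ℕ, 1 ≤ T →
      ξ T ≤ (β - 1) ^ 2 * ξ 0 / ((T : ℝ) + β - 1) ^ 2 + C * (T : ℝ) / ((T : ℝ) + β - 1) ^ 2 := by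
  intro T _
  have hdecr : Antitone fun t : ℕ => ((t : ℝ) + β - 1) ^ 2 * ξ t - C * t := by
    refine antitone_nat_of_succ_le fun t => ?_
    have hstep := sq_mul_le_sub_one_sq_mul_add (by positivity) (hξ t) (hrec t)
    push_cast
    linarith
  have hT : ((T : ℝ) + β - 1) ^ 2 * ξ T - C * T ≤ (β - 1) ^ 2 * ξ 0 := by
    simpa using hdecr (Nat.zero_le T)
  have hpos : 0 < (T : ℝ) + β - 1 := by linarith [T.cast_nonneg (α := ℝ)]
  rw [← add_div, le_div_iff₀ (by positivity)]
  linarith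

theorem sgd_recursion_bound (ξ : ℕ → ℝ) (β C : ℝ) (hβ : 2 ≤ β) (hC : 0 ≤ C)
    (hξ : ∀ t, 0 ≤ ξ t)
    (hrec : ∀ t : ℕ, ξ (t + 1) ≤ (1 - 3 / ((t : ℝ) + β)) * ξ t + C / ((t : ℝ) + β) ^ 2) :
    ∀ T : ℕ, 1 ≤ T →
      ξ T ≤ (β - 1) ^ 2 * ξ 0 / ((T : ℝ) + β - 1) ^ 2 + C * (T : ℝ) / ((T : ℝ) + β - 1) ^ 2 :=
  sgd_recursion_bound_general ξ β C hβ hξ hrec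
end

section
/- Let ψ_t ≥ 0 satisfy ψ_{t+1} ≤ (1 − 2/t)²·ψ_t + c_t for t ≥ t₀ ≥ 3, where c_t ≥ 0 and c_t = o(1/t²). Then ψ_k = o(1/k) as k → ∞, i.e., for every ε > 0 there is K such that ψ_k ≤ ε/k for all k ≥ K. -/
theorem recursion_littleO (ψ c : ℕ → ℝ) (t₀ : ℕ) (ht₀ : 3 ≤ t₀)
    (hψ : ∀ t, 0 ≤ ψ t) (hc : ∀ t, 0 ≤ c t)
    (hrec : ∀ t : ℕ, t₀ ≤ t → ψ (t + 1) ≤ (1 - 2 / (t : ℝ)) ^ 2 * ψ t + c t)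
    (hco : ∀ ε : ℝ, 0 < ε → ∃ K : ℕ, ∀ t : ℕ, K ≤ t → c t ≤ ε / (t : ℝ) ^ 2) :
    ∀ ε : ℝ, 0 < ε → ∃ K : ℕ, ∀ k : ℕ, K ≤ k → ψ k ≤ ε / (k : ℝ) := by
  intro ε hε
  have hδ : 0 < ε / 4 := by linarith
  obtain ⟨T₀, hT₀⟩ := hco (ε / 4) hδ
  set T : ℕ := max (max T₀ t₀) 3 with hTdef
  have hT3 : (3 : ℕ) ≤ T := le_max_right _ _
  have key : ∀ t : ℕ, T ≤ t →
      ((t : ℝ) + 1) * ψ (t + 1) - 2 * (ε / 4) ≤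
        (1 - 1 / (t : ℝ)) * ((t : ℝ) * ψ t - 2 * (ε / 4)) := by
    intro t ht
    have ht3 : (3 : ℝ) ≤ (t : ℝ) := by exact_mod_cast le_trans hT3 ht
    have htpos : (0 : ℝ) < (t : ℝ) := by linarith
    have h1 := hrec t (le_trans (le_trans (le_max_right _ _) (le_max_left _ _)) ht)
    have h2 := hT₀ t (le_trans (le_trans (le_max_left _ _) (le_max_left _ _)) ht)
    have hcoef : ((t : ℝ) + 1) * (1 - 2 / (t : ℝ)) ^ 2 ≤ (1 - 1 / (t : ℝ)) * (t : ℝ) := by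
      have e1 : (1 - 2 / (t : ℝ)) ^ 2 = ((t : ℝ) - 2) ^ 2 / (t : ℝ) ^ 2 := by
        field_simp
      have e2 : (1 - 1 / (t : ℝ)) * (t : ℝ) = (t : ℝ) - 1 := by
        field_simp
      rw [e1, e2, ← mul_div_assoc, div_le_iff₀ (by positivity)]
      nlinarith
    have hmul : ((t : ℝ) + 1) * ψ (t + 1) ≤
        ((t : ℝ) + 1) * ((1 - 2 / (t : ℝ)) ^ 2 * ψ t + c t) :=
      mul_le_mul_of_nonneg_left h1 (by linarith)
    have hA : ((t : ℝ) + 1) * ((1 - 2 / (t : ℝ)) ^ 2) * ψ t ≤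
        (1 - 1 / (t : ℝ)) * (t : ℝ) * ψ t :=
      mul_le_mul_of_nonneg_right hcoef (hψ t)
    have hB : ((t : ℝ) + 1) * c t ≤ 2 * (ε / 4) / (t : ℝ) := by
      have h3 : ((t : ℝ) + 1) * c t ≤ ((t : ℝ) + 1) * ((ε / 4) / (t : ℝ) ^ 2) :=
        mul_le_mul_of_nonneg_left h2 (by linarith)
      have h4 : ((t : ℝ) + 1) * ((ε / 4) / (t : ℝ) ^ 2) ≤ 2 * (ε / 4) / (t : ℝ) := by
        rw [show ((t : ℝ) + 1) * ((ε / 4) / (t : ℝ) ^ 2) = ((t : ℝ) + 1) * (ε / 4) / (t : ℝ) ^ 2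
          by ring, div_le_div_iff₀ (by positivity) htpos]
        nlinarith [mul_nonneg (mul_nonneg hδ.le htpos.le)
          (show (0:ℝ) ≤ (t:ℝ) - 1 by linarith)]
      linarith
    have heq : (1 - 1 / (t : ℝ)) * ((t : ℝ) * ψ t - 2 * (ε / 4)) =
        (1 - 1 / (t : ℝ)) * (t : ℝ) * ψ t + 2 * (ε / 4) / (t : ℝ) - 2 * (ε / 4) := by
      field_simp
      ring
    nlinarith [hmul, hA, hB]
  set A : ℝ := max ((T : ℝ) * ψ T - 2 * (ε / 4)) 0 with hAdef
  have hA0 : 0 ≤ A := le_max_right _ _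
  have hTpos : (0 : ℝ) < (T : ℝ) := by
    have : (3 : ℝ) ≤ (T : ℝ) := by exact_mod_cast hT3
    linarith
  have bound : ∀ k : ℕ, T ≤ k → (k : ℝ) * ψ k - 2 * (ε / 4) ≤ A * (T : ℝ) / (k : ℝ) := by
    intro k hk
    induction k, hk using Nat.le_induction with
    | base =>
        have : A * (T : ℝ) / (T : ℝ) = A := by field_simp
        rw [this]
        exact le_max_left _ _
    | succ k hk ih =>
        have hk3 : (3 : ℝ) ≤ (k : ℝ) := by
          exact_mod_cast le_trans hT3 hk
        have hkpos : (0 : ℝ) < (k : ℝ) := by linarith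
        have h := key k hk
        have hcoefnn : (0 : ℝ) ≤ 1 - 1 / (k : ℝ) := by
          rw [sub_nonneg, div_le_one hkpos]; linarith
        have h1 : (1 - 1 / (k : ℝ)) * ((k : ℝ) * ψ k - 2 * (ε / 4)) ≤
            (1 - 1 / (k : ℝ)) * (A * (T : ℝ) / (k : ℝ)) :=
          mul_le_mul_of_nonneg_left ih hcoefnn
        have hATnn : (0 : ℝ) ≤ A * (T : ℝ) := mul_nonneg hA0 (le_of_lt hTpos)
        have h2 : (1 - 1 / (k : ℝ)) * (A * (T : ℝ) / (k : ℝ)) ≤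
            A * (T : ℝ) / ((k : ℝ) + 1) := by
          have e : (1 - 1 / (k : ℝ)) * (A * (T : ℝ) / (k : ℝ)) =
              A * (T : ℝ) * (((k : ℝ) - 1) / (k : ℝ) ^ 2) := by
            field_simp
          rw [e, show A * (T : ℝ) / ((k : ℝ) + 1) = A * (T : ℝ) * (1 / ((k : ℝ) + 1)) by ring]
          apply mul_le_mul_of_nonneg_left _ hATnn
          rw [div_le_div_iff₀ (by positivity) (by linarith : (0:ℝ) < (k : ℝ) + 1)]
          nlinarith
        push_cast
        calc ((k : ℝ) + 1) * ψ (k + 1) - 2 * (ε / 4) ≤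
              (1 - 1 / (k : ℝ)) * ((k : ℝ) * ψ k - 2 * (ε / 4)) := h
          _ ≤ (1 - 1 / (k : ℝ)) * (A * (T : ℝ) / (k : ℝ)) := h1
          _ ≤ A * (T : ℝ) / ((k : ℝ) + 1) := h2
  refine ⟨max T (⌈2 * A * (T : ℝ) / ε⌉₊ + 1), fun k hk => ?_⟩
  have hk1 : T ≤ k := le_trans (le_max_left _ _) hk
  have hk2 : ⌈2 * A * (T : ℝ) / ε⌉₊ + 1 ≤ k := le_trans (le_max_right _ _) hk
  have hk3 : (3 : ℝ) ≤ (k : ℝ) := by exact_mod_cast le_trans hT3 hk1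
  have hkpos : (0 : ℝ) < (k : ℝ) := by linarith
  have hceil : 2 * A * (T : ℝ) / ε ≤ (k : ℝ) := by
    calc 2 * A * (T : ℝ) / ε ≤ (⌈2 * A * (T : ℝ) / ε⌉₊ : ℝ) := Nat.le_ceil _
      _ ≤ (k : ℝ) := by exact_mod_cast le_trans (Nat.le_succ _) hk2
  have hAT : A * (T : ℝ) / (k : ℝ) ≤ ε / 2 := by
    rw [div_le_div_iff₀ hkpos (by norm_num : (0:ℝ) < 2)]
    rw [div_le_iff₀ hε] at hceil
    nlinarith
  have hb := bound k hk1
  rw [le_div_iff₀ hkpos]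
  nlinarith
end

section
/- Let ψ_t ≥ 0 satisfy ψ_{t+1} ≤ (1−2/t)² ψ_t + 4σ²/(N μ² (t+1)²) for t ≥ t₀ ≥ 3. Then for all k ≥ t₀, ψ_k ≤ (t₀/k)⁴ ψ_{t₀} + (4σ²/(3Nμ²k))·(1 + O(1/k)). In particular lim sup_{k→∞} k·ψ_k ≤ 4σ²/(3Nμ²). -/
open Filter

set_option maxHeartbeats 1000000 in
theorem recursion_variance_bound (ψ : ℕ → ℝ) (σ μ : ℝ) (N : ℕ) (t₀ : ℕ)
    (hσ : 0 < σ) (hμ : 0 < μ) (hN : 1 ≤ N) (ht₀ : 3 ≤ t₀)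
    (hψ : ∀ t, 0 ≤ ψ t)
    (hrec : ∀ t : ℕ, t₀ ≤ t →
      ψ (t + 1) ≤ (1 - 2 / (t : ℝ)) ^ 2 * ψ t +
        4 * σ ^ 2 / ((N : ℝ) * μ ^ 2 * ((t : ℝ) + 1) ^ 2)) :
    (∃ C : ℝ, 0 ≤ C ∧ ∀ k : ℕ, t₀ ≤ k →
      ψ k ≤ ((t₀ : ℝ) / (k : ℝ)) ^ 4 * ψ t₀ +
        4 * σ ^ 2 / (3 * (N : ℝ) * μ ^ 2 * (k : ℝ)) * (1 + C / (k : ℝ))) ∧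
    Filter.limsup (fun k : ℕ => (k : ℝ) * ψ k) Filter.atTop ≤
      4 * σ ^ 2 / (3 * (N : ℝ) * μ ^ 2) := by
  have hNpos : (0:ℝ) < (N:ℝ) := by exact_mod_cast Nat.lt_of_lt_of_le Nat.zero_lt_one hN
  have hμ2 : (0:ℝ) < μ ^ 2 := by positivity
  have hσ2 : (0:ℝ) < σ ^ 2 := by positivity
  -- key induction
  have key : ∀ k : ℕ, t₀ ≤ k →
      (k:ℝ)^4 * ψ k ≤ (t₀:ℝ)^4 * ψ t₀ +
        4 * σ ^ 2 / ((N:ℝ) * μ ^ 2) * (((k:ℝ)^3 + 2*(k:ℝ)^2)/3) := by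
    intro k hk
    induction k, hk using Nat.le_induction with
    | base =>
      have h0 : (0:ℝ) ≤ 4 * σ ^ 2 / ((N:ℝ) * μ ^ 2) * (((t₀:ℝ)^3 + 2*(t₀:ℝ)^2)/3) := by
        positivity
      linarith
    | succ k hk ih =>
      have hk3 : (3:ℝ) ≤ (k:ℝ) := by exact_mod_cast le_trans ht₀ hk
      have hkpos : (0:ℝ) < (k:ℝ) := by linarith
      have hrk := hrec k hk
      have hcast : ((k+1 : ℕ) : ℝ) = (k:ℝ) + 1 := by push_cast; ring
      rw [hcast]
      have hmul : ((k:ℝ)+1)^4 * ψ (k+1) ≤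
          ((k:ℝ)+1)^4 * ((1 - 2 / (k:ℝ)) ^ 2 * ψ k +
            4 * σ ^ 2 / ((N : ℝ) * μ ^ 2 * ((k : ℝ) + 1) ^ 2)) := by
        have : (0:ℝ) ≤ ((k:ℝ)+1)^4 := by positivity
        exact mul_le_mul_of_nonneg_left hrk this
      have hcoef : ((k:ℝ)+1)^4 * (1 - 2 / (k:ℝ)) ^ 2 ≤ (k:ℝ)^4 := by
        have h1 : (1 - 2 / (k:ℝ)) = ((k:ℝ) - 2) / (k:ℝ) := by
          field_simp
        rw [h1, div_pow, mul_div_assoc', div_le_iff₀ (by positivity)]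
        nlinarith [sq_nonneg ((k:ℝ) - 3), sq_nonneg ((k:ℝ)+1), sq_nonneg ((k:ℝ)*((k:ℝ)-3))]
      have hterm : ((k:ℝ)+1)^4 * (4 * σ ^ 2 / ((N : ℝ) * μ ^ 2 * ((k : ℝ) + 1) ^ 2))
          = 4 * σ ^ 2 / ((N:ℝ) * μ ^ 2) * ((k:ℝ)+1)^2 := by
        have hne : ((k:ℝ)+1) ≠ 0 := by positivity
        field_simp
      have hstep : ((k:ℝ)+1)^4 * ψ (k+1) ≤
          (k:ℝ)^4 * ψ k + 4 * σ ^ 2 / ((N:ℝ) * μ ^ 2) * ((k:ℝ)+1)^2 := by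
        have hψk := hψ k
        calc ((k:ℝ)+1)^4 * ψ (k+1) ≤ _ := hmul
          _ = ((k:ℝ)+1)^4 * (1 - 2 / (k:ℝ)) ^ 2 * ψ k
              + ((k:ℝ)+1)^4 * (4 * σ ^ 2 / ((N : ℝ) * μ ^ 2 * ((k : ℝ) + 1) ^ 2)) := by ring
          _ ≤ (k:ℝ)^4 * ψ k + 4 * σ ^ 2 / ((N:ℝ) * μ ^ 2) * ((k:ℝ)+1)^2 := by
              rw [hterm]
              have := mul_le_mul_of_nonneg_right hcoef hψk
              linarith
      have hsum : (4:ℝ) * σ ^ 2 / ((N:ℝ) * μ ^ 2) * ((k:ℝ)+1)^2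
          ≤ 4 * σ ^ 2 / ((N:ℝ) * μ ^ 2) * ((((k:ℝ)+1)^3 + 2*((k:ℝ)+1)^2)/3
            - (((k:ℝ)^3 + 2*(k:ℝ)^2)/3)) := by
        have hc : (0:ℝ) ≤ 4 * σ ^ 2 / ((N:ℝ) * μ ^ 2) := by positivity
        have : ((k:ℝ)+1)^2 ≤ (((k:ℝ)+1)^3 + 2*((k:ℝ)+1)^2)/3 - (((k:ℝ)^3 + 2*(k:ℝ)^2)/3) := by
          nlinarith
        exact mul_le_mul_of_nonneg_left this hc
      linarith
  have hNμne : (N:ℝ) * μ ^ 2 ≠ 0 := by positivity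
  -- the explicit bound with C = 2
  have main : ∀ k : ℕ, t₀ ≤ k →
      ψ k ≤ ((t₀ : ℝ) / (k : ℝ)) ^ 4 * ψ t₀ +
        4 * σ ^ 2 / (3 * (N : ℝ) * μ ^ 2 * (k : ℝ)) * (1 + 2 / (k : ℝ)) := by
    intro k hk
    have hk3 : (3:ℝ) ≤ (k:ℝ) := by exact_mod_cast le_trans ht₀ hk
    have hkpos : (0:ℝ) < (k:ℝ) := by linarith
    have h4 : (0:ℝ) < (k:ℝ)^4 := by positivity
    have hb := key k hk
    have heq : ((t₀:ℝ)^4 * ψ t₀ + 4 * σ ^ 2 / ((N:ℝ) * μ ^ 2) * (((k:ℝ)^3 + 2*(k:ℝ)^2)/3))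
        / (k:ℝ)^4
        = ((t₀ : ℝ) / (k : ℝ)) ^ 4 * ψ t₀ +
        4 * σ ^ 2 / (3 * (N : ℝ) * μ ^ 2 * (k : ℝ)) * (1 + 2 / (k : ℝ)) := by
      field_simp
    rw [← heq]
    rw [le_div_iff₀ h4]
    linarith
  refine ⟨⟨2, by norm_num, main⟩, ?_⟩
  -- limsup part
  set L : ℝ := 4 * σ ^ 2 / (3 * (N:ℝ) * μ ^ 2) with hL
  set c : ℝ := (t₀:ℝ)^4 * ψ t₀ with hc
  have hg : Tendsto (fun k : ℕ => c * (1/(k:ℝ))^3 + L * (1 + 2 * (1/(k:ℝ))))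
      atTop (nhds L) := by
    have h1 : Tendsto (fun k : ℕ => 1/(k:ℝ)) atTop (nhds 0) :=
      tendsto_one_div_atTop_nhds_zero_nat
    have h2 := ((h1.pow 3).const_mul c).add (((h1.const_mul 2).const_add 1).const_mul L)
    norm_num at h2
    have he : (fun k : ℕ => c * (1/(k:ℝ))^3 + L * (1 + 2 * (1/(k:ℝ))))
        = fun k : ℕ => c * ((k:ℝ) ^ 3)⁻¹ + L * (1 + 2 * ((k:ℝ))⁻¹) := by
      funext k
      rw [div_pow, one_pow, one_div, one_div]
    rw [he]
    exact h2
  have hev : ∀ᶠ k : ℕ in atTop, (k:ℝ) * ψ k ≤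
      c * (1/(k:ℝ))^3 + L * (1 + 2 * (1/(k:ℝ))) := by
    filter_upwards [eventually_ge_atTop t₀] with k hk
    have hk3 : (3:ℝ) ≤ (k:ℝ) := by exact_mod_cast le_trans ht₀ hk
    have hkpos : (0:ℝ) < (k:ℝ) := by linarith
    have hm := main k hk
    have := mul_le_mul_of_nonneg_left hm (le_of_lt hkpos)
    have heq : (k:ℝ) * (((t₀ : ℝ) / (k : ℝ)) ^ 4 * ψ t₀ +
        4 * σ ^ 2 / (3 * (N : ℝ) * μ ^ 2 * (k : ℝ)) * (1 + 2 / (k : ℝ)))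
        = c * (1/(k:ℝ))^3 + L * (1 + 2 * (1/(k:ℝ))) := by
      rw [hc, hL]
      field_simp
    rw [heq] at this
    exact this
  have hbdd : IsBoundedUnder (· ≤ ·) atTop
      (fun k : ℕ => c * (1/(k:ℝ))^3 + L * (1 + 2 * (1/(k:ℝ)))) :=
    hg.isBoundedUnder_le
  have hcobdd : IsCoboundedUnder (· ≤ ·) atTop (fun k : ℕ => (k:ℝ) * ψ k) := by
    apply IsBoundedUnder.isCoboundedUnder_le
    exact ⟨0, Filter.eventually_map.2 (Filter.Eventually.of_forall fun k =>
      mul_nonneg (Nat.cast_nonneg k) (hψ k))⟩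
  calc Filter.limsup (fun k : ℕ => (k : ℝ) * ψ k) Filter.atTop
      ≤ Filter.limsup (fun k : ℕ => c * (1/(k:ℝ))^3 + L * (1 + 2 * (1/(k:ℝ)))) atTop :=
        Filter.limsup_le_limsup hev hcobdd hbdd
    _ = L := hg.limsup_eq
end
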